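/- arXiv:0910.2853 — 5 statements merged into one kernel-verified Lean document; each statement's English description precedes it below -/
import Mathlib

section
/- Every locally decreasing abstract rewrite system is confluent. That is, if ⟨A, {→_α}_{α∈I}⟩ is an ARS and > is a well-founded strict order on I such that LD_>(α,β) holds for all α, β ∈ I, then the union → of all the relations →_α is confluent. -/
open Relation

/-- The union of an indexed family of relations (the rewrite relation of the ARS). -/
def unionRel {A I : Type*} (r : I → A → A → Prop) : A → A → Prop :=
  fun a b => ∃ α, r α a b

/-- `⇣_α`: the union of `→_β` over all labels `β` with `α > β` (here `gt α β`). -/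
def below {A I : Type*} (r : I → A → A → Prop) (gt : I → I → Prop) (α : I) :
    A → A → Prop :=
  fun a b => ∃ β, gt α β ∧ r β a b

/-- Confluence of a binary relation. -/
def Confluent {A : Type*} (r : A → A → Prop) : Prop :=
  ∀ s t u, ReflTransGen r s t → ReflTransGen r s u →
    ∃ v, ReflTransGen r t v ∧ ReflTransGen r u v

/-!
Van Oostrom's proof. Measure a peak `t ←κ s →ν u` of labelled reductions by the multiset
`|κ| + |ν|`, where `|κ|` keeps the labels of `κ` that are not below an earlier label of `κ`,
and compare measures by the Dershowitz–Manna order, which is well founded. By induction on this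
measure every peak has a valley `t →ρ v ←ρ' u` in which `ρ` is decreasing with respect to
`(κ, ν)` and `ρ'` with respect to `(ν, κ)`. For `κ = a κ'` and `ν = b ν'` the local peak is
closed by a locally decreasing diagram `σ, τ`; this leaves the two side peaks `(κ', σ)` and
`(ν', τ)` and the middle peak between the valleys closing them. All three are smaller than
`(κ, ν)`, the middle one because those valleys are decreasing, and the three valleys they
receive paste to a decreasing valley for `(κ, ν)`.
-/

namespace Multiset

variable {α : Type*} [Preorder α] {M N M' N' Y Z : Multiset α}

/-- The reflexive closure of `IsDershowitzMannaLT`: for `Z = 0` the last condition forces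
`Y = 0`. -/
def IsDershowitzMannaLE (M N : Multiset α) : Prop :=
  ∃ X Y Z, M = X + Y ∧ N = X + Z ∧ ∀ y ∈ Y, ∃ z ∈ Z, y < z

theorem isDershowitzMannaLE_of_le (h : M ≤ N) : IsDershowitzMannaLE M N := by
  obtain ⟨Z, rfl⟩ := le_iff_exists_add.1 h
  exact ⟨M, 0, Z, by simp, rfl, by simp⟩

theorem isDershowitzMannaLE_of_forall_exists_lt (h : ∀ y ∈ Y, ∃ z ∈ Z, y < z) :
    IsDershowitzMannaLE Y Z :=
  ⟨0, Y, Z, by simp, by simp, h⟩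

theorem forall_exists_lt_add {Y' Z' : Multiset α} (h : ∀ y ∈ Y, ∃ z ∈ Z, y < z)
    (h' : ∀ y ∈ Y', ∃ z ∈ Z', y < z) : ∀ y ∈ Y + Y', ∃ z ∈ Z + Z', y < z := by
  intro y hy
  rcases mem_add.1 hy with hy | hy
  · obtain ⟨z, hz, hyz⟩ := h y hy
    exact ⟨z, mem_add.2 (Or.inl hz), hyz⟩
  · obtain ⟨z, hz, hyz⟩ := h' y hy
    exact ⟨z, mem_add.2 (Or.inr hz), hyz⟩

theorem IsDershowitzMannaLE.add (h : IsDershowitzMannaLE M N) (h' : IsDershowitzMannaLE M' N') :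
    IsDershowitzMannaLE (M + M') (N + N') := by
  obtain ⟨X, Y, Z, rfl, rfl, hYZ⟩ := h
  obtain ⟨X', Y', Z', rfl, rfl, hYZ'⟩ := h'
  exact ⟨X + X', Y + Y', Z + Z', by abel, by abel, forall_exists_lt_add hYZ hYZ'⟩

theorem IsDershowitzMannaLE.add_left (h : IsDershowitzMannaLE M N) (P : Multiset α) :
    IsDershowitzMannaLE (P + M) (P + N) :=
  (isDershowitzMannaLE_of_le le_rfl).add h

theorem IsDershowitzMannaLE.trans_le (h : IsDershowitzMannaLE M N) (hN : N ≤ N') :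
    IsDershowitzMannaLE M N' := by
  obtain ⟨Z, rfl⟩ := le_iff_exists_add.1 hN
  simpa using h.add (isDershowitzMannaLE_of_le (zero_le Z))

theorem IsDershowitzMannaLE.isDershowitzMannaLT_add (h : IsDershowitzMannaLE M N) (hZ : Z ≠ 0)
    (hYZ : ∀ y ∈ Y, ∃ z ∈ Z, y < z) : IsDershowitzMannaLT (M + Y) (N + Z) := by
  obtain ⟨X, Y', Z', rfl, rfl, hYZ'⟩ := h
  exact ⟨X, Y' + Y, Z' + Z, by simp [hZ], by abel, by abel, forall_exists_lt_add hYZ' hYZ⟩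

end Multiset

open LowerSet

section Labels

variable {I : Type*} [Preorder I] {S S' T : LowerSet I} {c x : I} {l σ ρ ρ₀ : List I}

theorem LowerSet.Iio_le_of_mem (h : c ∈ S) : Iio c ≤ S :=
  fun _ hx => S.lower (le_of_lt hx) h

def strictLowerClosure (l : List I) : LowerSet I :=
  ⨆ c ∈ l, Iio c

@[simp]
theorem mem_strictLowerClosure : x ∈ strictLowerClosure l ↔ ∃ c ∈ l, x < c := by
  simp [strictLowerClosure]

@[simp]
theorem strictLowerClosure_nil : strictLowerClosure ([] : List I) = ⊥ := by
  ext; simp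

@[simp]
theorem strictLowerClosure_cons :
    strictLowerClosure (c :: l) = Iio c ⊔ strictLowerClosure l := by
  ext; simp

open Classical in
/-- The lexicographic maximum measure of `l` relative to `T`: the labels of `l` that are neither
in `T` nor below an earlier label of `l`. -/
noncomputable def lexMax : LowerSet I → List I → Multiset I
  | _, [] => 0
  | T, c :: l => if c ∈ T then lexMax T l else c ::ₘ lexMax (T ⊔ Iio c) l

@[simp]
theorem lexMax_nil : lexMax T [] = 0 := rfl

theorem lexMax_cons_of_mem (h : c ∈ T) : lexMax T (c :: l) = lexMax T l := by
  simp [lexMax, h]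

theorem lexMax_cons_of_notMem (h : c ∉ T) :
    lexMax T (c :: l) = c ::ₘ lexMax (T ⊔ Iio c) l := by
  simp [lexMax, h]

open Classical in
theorem lexMax_eq_filter (T : LowerSet I) (l : List I) :
    lexMax T l = (lexMax ⊥ l).filter (· ∉ T) := by
  induction l generalizing T with
  | nil => simp
  | cons c l ih =>
    rw [lexMax_cons_of_notMem notMem_bot, bot_sup_eq, ih (Iio c)]
    by_cases hc : c ∈ T
    · rw [lexMax_cons_of_mem hc, ih, Multiset.filter_cons_of_neg (p := (· ∉ T)) _ (not_not.2 hc),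
        Multiset.filter_filter]
      exact Multiset.filter_congr fun x _ =>
        ⟨fun hx => ⟨hx, fun hxc => hx (Iio_le_of_mem hc hxc)⟩, And.left⟩
    · rw [lexMax_cons_of_notMem hc, ih, Multiset.filter_cons_of_pos (p := (· ∉ T)) _ hc,
        Multiset.filter_filter]
      exact congrArg _ (Multiset.filter_congr fun x _ => by simp [and_comm])

theorem lexMax_anti {T' : LowerSet I} (h : T ≤ T') (l : List I) : lexMax T' l ≤ lexMax T l := by
  classical
  rw [lexMax_eq_filter T, lexMax_eq_filter T']
  exact Multiset.monotone_filter_right _ fun x hx hxT => hx (h hxT)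

theorem exists_lexMax_eq_add (T T' : LowerSet I) (l : List I) :
    ∃ R, lexMax T l = lexMax (T ⊔ T') l + R ∧ ∀ x ∈ R, x ∈ T' := by
  classical
  refine ⟨(lexMax T l).filter (· ∈ T'), ?_, fun x hx => (Multiset.mem_filter.1 hx).2⟩
  conv_lhs => rw [← Multiset.filter_add_not (· ∉ T') (lexMax T l)]
  simp only [not_not, lexMax_eq_filter (T ⊔ T'), lexMax_eq_filter T, Multiset.filter_filter,
    mem_sup_iff, not_or, and_comm]

/-- `Decreasing S l ρ`: the labels `ρ` have the shape `S^* · l₁^= · S₁^* · l₂^= ⋯ lₙ^= · Sₙ^*`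
with `Sᵢ = S ⊔ Iio l₁ ⊔ ⋯ ⊔ Iio lᵢ`; for `S = ⇣κ` this is the shape
`⇣κ^* · l₁^= · ⇣(κ l₁)^* ⋯` of the valleys in decreasing diagrams. -/
inductive Decreasing : LowerSet I → List I → List I → Prop
  | nil (S : LowerSet I) : Decreasing S [] []
  | low {S : LowerSet I} {l ρ : List I} {x : I} :
      x ∈ S → Decreasing S l ρ → Decreasing S l (x :: ρ)
  | keep {S : LowerSet I} {l ρ : List I} (b : I) :
      Decreasing (S ⊔ Iio b) l ρ → Decreasing S (b :: l) (b :: ρ)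
  | skip {S : LowerSet I} {l ρ : List I} (b : I) :
      Decreasing (S ⊔ Iio b) l ρ → Decreasing S (b :: l) ρ

namespace Decreasing

theorem refl (S : LowerSet I) (l : List I) : Decreasing S l l := by
  induction l generalizing S with
  | nil => exact nil S
  | cons b l ih => exact keep b (ih _)

theorem nil_right (S : LowerSet I) (l : List I) : Decreasing S l [] := by
  induction l generalizing S with
  | nil => exact nil S
  | cons b l ih => exact skip b (ih _)

theorem prepend (h₀ : ∀ x ∈ ρ₀, x ∈ S) (h : Decreasing S l ρ) : Decreasing S l (ρ₀ ++ ρ) := by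
  induction ρ₀ with
  | nil => exact h
  | cons x ρ₀ ih => exact low (h₀ x (by simp)) (ih fun y hy => h₀ y (by simp [hy]))

theorem mono (h : Decreasing S l ρ) (hS : S ≤ S') : Decreasing S' l ρ := by
  induction h generalizing S' with
  | nil => exact nil _
  | low hx _ ih => exact low (hS hx) (ih hS)
  | keep b _ ih => exact keep b (ih (sup_le_sup_right hS _))
  | skip b _ ih => exact skip b (ih (sup_le_sup_right hS _))

theorem append {l₁ l₂ ρ₁ ρ₂ : List I} (h₁ : Decreasing S l₁ ρ₁)
    (h₂ : Decreasing (S ⊔ strictLowerClosure l₁) l₂ ρ₂) :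
    Decreasing S (l₁ ++ l₂) (ρ₁ ++ ρ₂) := by
  induction h₁ with
  | nil => simpa using h₂
  | low hx _ ih => exact low hx (ih h₂)
  | keep b _ ih => exact keep b (ih (by simpa [sup_assoc] using h₂))
  | skip b _ ih => exact skip b (ih (by simpa [sup_assoc] using h₂))

theorem strictLowerClosure_le (h : Decreasing S l ρ) :
    strictLowerClosure ρ ≤ S ⊔ strictLowerClosure l := by
  induction h with
  | nil => simp
  | low hx _ ih =>
    rw [strictLowerClosure_cons]
    exact sup_le (le_sup_of_le_left (Iio_le_of_mem hx)) ih
  | keep b _ ih => simp only [strictLowerClosure_cons] at ih ⊢; order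
  | skip b _ ih => simp only [strictLowerClosure_cons] at ih ⊢; order

theorem exists_of_cons (h : Decreasing S (c :: σ) ρ) :
    ∃ ρ₀ ρ', (∀ x ∈ ρ₀, x ∈ S) ∧ Decreasing (S ⊔ Iio c) σ ρ' ∧
      (ρ = ρ₀ ++ ρ' ∨ ρ = ρ₀ ++ c :: ρ') := by
  generalize hl : c :: σ = l at h
  induction h with
  | nil => cases hl
  | low hx _ ih =>
    obtain ⟨ρ₀, ρ', h₀, h', rfl | rfl⟩ := ih hl
    · exact ⟨_ :: ρ₀, ρ', List.forall_mem_cons.2 ⟨hx, h₀⟩, h', Or.inl rfl⟩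
    · exact ⟨_ :: ρ₀, ρ', List.forall_mem_cons.2 ⟨hx, h₀⟩, h', Or.inr rfl⟩
  | keep b h => cases hl; exact ⟨[], _, by simp, h, Or.inr rfl⟩
  | skip b h => cases hl; exact ⟨[], _, by simp, h, Or.inl rfl⟩

theorem trans {S₂ : LowerSet I} (h₁ : Decreasing S₂ l σ) (h₂ : Decreasing S σ ρ) :
    Decreasing (S₂ ⊔ S) l ρ := by
  induction h₁ generalizing S ρ with
  | nil => exact h₂.mono le_sup_right
  | @low S₂ l σ x hx _ ih =>
    obtain ⟨ρ₀, ρ', h₀, h', rfl | rfl⟩ := h₂.exists_of_cons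
    all_goals
      have hρ' : Decreasing (S₂ ⊔ S) l ρ' := (ih h').mono (by have := Iio_le_of_mem hx; order)
      refine prepend (fun y hy => mem_sup_iff.2 (Or.inr (h₀ y hy))) ?_
    · exact hρ'
    · exact low (mem_sup_iff.2 (Or.inl hx)) hρ'
  | @keep S₂ l σ b _ ih =>
    obtain ⟨ρ₀, ρ', h₀, h', rfl | rfl⟩ := h₂.exists_of_cons
    all_goals
      have hρ' : Decreasing (S₂ ⊔ S ⊔ Iio b) l ρ' := (ih h').mono (by order)
      refine prepend (fun y hy => mem_sup_iff.2 (Or.inr (h₀ y hy))) ?_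
    · exact skip b hρ'
    · exact keep b hρ'
  | @skip S₂ l σ b _ ih => exact skip b ((ih h₂).mono (by order))

theorem lexMax_le (h : Decreasing S l ρ) (hT : S ≤ T) :
    (lexMax T ρ).IsDershowitzMannaLE (lexMax T l) := by
  induction h generalizing T with
  | nil => exact Multiset.isDershowitzMannaLE_of_le le_rfl
  | low hx _ ih => rw [lexMax_cons_of_mem (hT hx)]; exact ih hT
  | keep b _ ih =>
    by_cases hb : b ∈ T
    · rw [lexMax_cons_of_mem hb, lexMax_cons_of_mem hb]
      exact ih (sup_le hT (Iio_le_of_mem hb))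
    · rw [lexMax_cons_of_notMem hb, lexMax_cons_of_notMem hb, ← Multiset.singleton_add,
        ← Multiset.singleton_add]
      exact (ih (sup_le_sup_right hT _)).add_left {b}
  | @skip S l ρ b _ ih =>
    by_cases hb : b ∈ T
    · rw [lexMax_cons_of_mem hb]
      exact ih (sup_le hT (Iio_le_of_mem hb))
    -- without the step `b`, the labels of `ρ` below `b` count; they are paid for by `b`
    · obtain ⟨R, hR, hRb⟩ := exists_lexMax_eq_add T (Iio b) ρ
      rw [lexMax_cons_of_notMem hb, hR, ← Multiset.singleton_add, add_comm ({b} : Multiset I)]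
      exact (ih (sup_le_sup_right hT _)).add
        (Multiset.isDershowitzMannaLE_of_forall_exists_lt fun y hy => ⟨b, by simp, hRb y hy⟩)

end Decreasing

end Labels

section Rewriting

variable {A I : Type*} {r : I → A → A → Prop}

inductive Steps (r : I → A → A → Prop) : List I → A → A → Prop
  | nil (a : A) : Steps r [] a a
  | cons {α : I} {l : List I} {a b c : A} : r α a b → Steps r l b c → Steps r (α :: l) a c

namespace Steps

theorem append {l₁ l₂ : List I} {a b c : A} (h₁ : Steps r l₁ a b) (h₂ : Steps r l₂ b c) :
    Steps r (l₁ ++ l₂) a c := by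
  induction h₁ with
  | nil => exact h₂
  | cons h _ ih => exact cons h (ih h₂)

theorem reflTransGen {l : List I} {a b : A} (h : Steps r l a b) :
    ReflTransGen (unionRel r) a b := by
  induction h with
  | nil => exact .refl
  | cons h _ ih => exact .head ⟨_, h⟩ ih

theorem exists_of_reflTransGen {P : I → Prop} {R : A → A → Prop}
    (hR : ∀ a b, R a b → ∃ α, P α ∧ r α a b) {a b : A} (h : ReflTransGen R a b) :
    ∃ l, Steps r l a b ∧ ∀ α ∈ l, P α := by
  induction h using ReflTransGen.head_induction_on with
  | refl => exact ⟨[], nil _, by simp⟩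
  | head hab _ ih =>
    obtain ⟨α, hα, h⟩ := hR _ _ hab
    obtain ⟨l, hl, hlP⟩ := ih
    exact ⟨α :: l, cons h hl, List.forall_mem_cons.2 ⟨hα, hlP⟩⟩

end Steps

variable [Preorder I]

def LocallyDecreasing (r : I → A → A → Prop) : Prop :=
  ∀ α β s t u, r α s t → r β s u →
    ∃ t₁ t₂ u₁ u₂ v,
      ReflTransGen (below r (· > ·) α) t t₁ ∧
      ReflGen (r β) t₁ t₂ ∧
      ReflTransGen (fun a b => below r (· > ·) α a b ∨ below r (· > ·) β a b) t₂ v ∧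
      ReflTransGen (below r (· > ·) β) u u₁ ∧
      ReflGen (r α) u₁ u₂ ∧
      ReflTransGen (fun a b => below r (· > ·) α a b ∨ below r (· > ·) β a b) u₂ v

theorem exists_decreasing_steps {a b : I} {t t₁ t₂ v : A}
    (h₁ : ReflTransGen (below r (· > ·) a) t t₁) (h₂ : ReflGen (r b) t₁ t₂)
    (h₃ : ReflTransGen (fun x y => below r (· > ·) a x y ∨ below r (· > ·) b x y) t₂ v) :
    ∃ σ, Steps r σ t v ∧ Decreasing (Iio a) [b] σ := by
  obtain ⟨l₁, hl₁, hl₁a⟩ := Steps.exists_of_reflTransGen (P := (· ∈ Iio a)) (fun _ _ h => h) h₁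
  obtain ⟨l₃, hl₃, hl₃ab⟩ := Steps.exists_of_reflTransGen (P := (· ∈ Iio a ⊔ Iio b))
    (by rintro _ _ (⟨c, hc, h⟩ | ⟨c, hc, h⟩) <;> exact ⟨c, by simp [hc], h⟩) h₃
  have hl₃D : Decreasing (Iio a ⊔ Iio b) [] l₃ := by
    simpa using (Decreasing.nil _).prepend hl₃ab
  cases h₂ with
  | refl => exact ⟨l₁ ++ l₃, hl₁.append hl₃, (Decreasing.skip b hl₃D).prepend hl₁a⟩
  | single h =>
    exact ⟨l₁ ++ b :: l₃, hl₁.append (.cons h hl₃), (Decreasing.keep b hl₃D).prepend hl₁a⟩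

theorem LocallyDecreasing.exists_decreasing_diagram (hLD : LocallyDecreasing r) {a b : I}
    {s t u : A} (ha : r a s t) (hb : r b s u) :
    ∃ v σ τ, Steps r σ t v ∧ Steps r τ u v ∧
      Decreasing (Iio a) [b] σ ∧ Decreasing (Iio b) [a] τ := by
  obtain ⟨t₁, t₂, u₁, u₂, v, ht₁, ht₂, ht₃, hu₁, hu₂, hu₃⟩ := hLD a b s t u ha hb
  obtain ⟨σ, hσ, hσD⟩ := exists_decreasing_steps ht₁ ht₂ ht₃
  obtain ⟨τ, hτ, hτD⟩ :=
    exists_decreasing_steps hu₁ hu₂ (ReflTransGen.mono (fun _ _ => Or.symm) _ _ hu₃)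
  exact ⟨v, σ, τ, hσ, hτ, hσD, hτD⟩

noncomputable def peakMeasure (κ ν : List I) : Multiset I :=
  lexMax ⊥ κ + lexMax ⊥ ν

theorem peakMeasure_comm (κ ν : List I) : peakMeasure κ ν = peakMeasure ν κ :=
  add_comm _ _

theorem peakMeasure_cons_cons (a b : I) (κ ν : List I) :
    peakMeasure (a :: κ) (b :: ν) = {a} + lexMax (Iio a) κ + ({b} + lexMax (Iio b) ν) := by
  simp [peakMeasure, lexMax_cons_of_notMem, Multiset.singleton_add]

theorem peakMeasure_side_lt {a b : I} {κ ν σ : List I} (hσ : Decreasing (Iio a) [b] σ) :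
    (peakMeasure κ σ).IsDershowitzMannaLT (peakMeasure (a :: κ) (b :: ν)) := by
  obtain ⟨R₁, hR₁, hR₁a⟩ := exists_lexMax_eq_add ⊥ (Iio a) κ
  obtain ⟨R₂, hR₂, hR₂a⟩ := exists_lexMax_eq_add ⊥ (Iio a) σ
  rw [bot_sup_eq] at hR₁ hR₂
  have hσb : (lexMax (Iio a) σ).IsDershowitzMannaLE ({b} + lexMax (Iio b) ν) :=
    (hσ.lexMax_le le_rfl).trans_le <| (lexMax_anti bot_le _).trans <| by
      simp [lexMax_cons_of_notMem]
  have hR : ∀ y ∈ R₁ + R₂, ∃ z ∈ ({a} : Multiset I), y < z := fun y hy =>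
    ⟨a, Multiset.mem_singleton_self a, (Multiset.mem_add.1 hy).elim (hR₁a y) (hR₂a y)⟩
  have := (hσb.add_left (lexMax (Iio a) κ)).isDershowitzMannaLT_add
    (Multiset.singleton_ne_zero a) hR
  rw [peakMeasure, peakMeasure_cons_cons, hR₁, hR₂]
  convert this using 1 <;> abel

theorem peakMeasure_middle_lt {a b : I} {κ ν σ τ ρ₁ ρ₂ : List I}
    (hσ : Decreasing (Iio a) [b] σ) (hτ : Decreasing (Iio b) [a] τ)
    (h₁ : Decreasing (strictLowerClosure σ) κ ρ₁) (h₂ : Decreasing (strictLowerClosure τ) ν ρ₂) :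
    (peakMeasure ρ₁ ρ₂).IsDershowitzMannaLT (peakMeasure (a :: κ) (b :: ν)) := by
  have hσT : strictLowerClosure σ ≤ Iio a ⊔ Iio b := by simpa using hσ.strictLowerClosure_le
  have hτT : strictLowerClosure τ ≤ Iio a ⊔ Iio b := by
    simpa [sup_comm] using hτ.strictLowerClosure_le
  obtain ⟨R₁, hR₁, hR₁ab⟩ := exists_lexMax_eq_add ⊥ (Iio a ⊔ Iio b) ρ₁
  obtain ⟨R₂, hR₂, hR₂ab⟩ := exists_lexMax_eq_add ⊥ (Iio a ⊔ Iio b) ρ₂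
  rw [bot_sup_eq] at hR₁ hR₂
  have h₁κ := (h₁.lexMax_le hσT).trans_le (lexMax_anti le_sup_left κ)
  have h₂ν := (h₂.lexMax_le hτT).trans_le (lexMax_anti le_sup_right ν)
  have hR : ∀ y ∈ R₁ + R₂, ∃ z ∈ ({a} + {b} : Multiset I), y < z := by
    intro y hy
    rcases mem_sup_iff.1 ((Multiset.mem_add.1 hy).elim (hR₁ab y) (hR₂ab y)) with hya | hyb
    exacts [⟨a, by simp, hya⟩, ⟨b, by simp, hyb⟩]
  have := (h₁κ.add h₂ν).isDershowitzMannaLT_add (by simp) hR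
  rw [peakMeasure, peakMeasure_cons_cons, hR₁, hR₂]
  convert this using 1 <;> abel

theorem decreasing_append_of_diagram {a b : I} {κ ν σ τ ρ₁ ρ₁' ρ₂' ρ₃ : List I}
    (hσ : Decreasing (Iio a) [b] σ) (hτ : Decreasing (Iio b) [a] τ)
    (h₁ : Decreasing (strictLowerClosure κ) σ ρ₁)
    (h₁' : Decreasing (strictLowerClosure σ) κ ρ₁')
    (h₂' : Decreasing (strictLowerClosure τ) ν ρ₂')
    (h₃ : Decreasing (strictLowerClosure ρ₁') ρ₂' ρ₃) :
    Decreasing (strictLowerClosure (a :: κ)) (b :: ν) (ρ₁ ++ ρ₃) := by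
  have hσ' := hσ.strictLowerClosure_le
  have hτ' := hτ.strictLowerClosure_le
  have hρ₁' := h₁'.strictLowerClosure_le
  rw [strictLowerClosure_cons]
  refine (hσ.trans h₁).append ((h₂'.trans h₃).mono ?_)
  simp only [strictLowerClosure_cons, strictLowerClosure_nil, sup_bot_eq] at hσ' hτ' ⊢
  exact sup_le (by order) (by order)

theorem LocallyDecreasing.exists_decreasing_valley [WellFoundedLT I] (hLD : LocallyDecreasing r)
    {κ ν : List I} {s t u : A} (hκ : Steps r κ s t) (hν : Steps r ν s u) :
    ∃ v ρ ρ', Steps r ρ t v ∧ Steps r ρ' u v ∧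
      Decreasing (strictLowerClosure κ) ν ρ ∧ Decreasing (strictLowerClosure ν) κ ρ' := by
  induction hM : peakMeasure κ ν
    using (Multiset.wellFounded_isDershowitzMannaLT (α := I)).induction
    generalizing κ ν s t u with | h M ih
  subst hM
  cases hκ with
  | nil => exact ⟨u, ν, [], hν, .nil u, .refl _ _, .nil_right _ _⟩
  | @cons a κ _ t₁ _ ha hκ =>
  cases hν with
  | nil => exact ⟨t, [], a :: κ, .nil t, .cons ha hκ, .nil_right _ _, .refl _ _⟩
  | @cons b ν _ u₁ _ hb hν =>
  obtain ⟨v₁, σ, τ, hσ, hτ, hσD, hτD⟩ := hLD.exists_decreasing_diagram ha hb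
  obtain ⟨w₁, ρ₁, ρ₁', hρ₁, hρ₁', hρ₁D, hρ₁'D⟩ := ih _ (peakMeasure_side_lt hσD) hκ hσ rfl
  obtain ⟨w₂, ρ₂, ρ₂', hρ₂, hρ₂', hρ₂D, hρ₂'D⟩ := ih _
    (by rw [peakMeasure_comm (a :: κ)]; exact peakMeasure_side_lt hτD) hν hτ rfl
  obtain ⟨v, ρ₃, ρ₃', hρ₃, hρ₃', hρ₃D, hρ₃'D⟩ :=
    ih _ (peakMeasure_middle_lt hσD hτD hρ₁'D hρ₂'D) hρ₁' hρ₂' rfl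
  exact ⟨v, ρ₁ ++ ρ₃, ρ₂ ++ ρ₃', hρ₁.append hρ₃, hρ₂.append hρ₃',
    decreasing_append_of_diagram hσD hτD hρ₁D hρ₁'D hρ₂'D hρ₃D,
    decreasing_append_of_diagram hτD hσD hρ₂D hρ₂'D hρ₁'D hρ₃'D⟩

theorem LocallyDecreasing.confluent [WellFoundedLT I] (hLD : LocallyDecreasing r) :
    Confluent (unionRel r) := by
  intro s t u hst hsu
  obtain ⟨κ, hκ, -⟩ := Steps.exists_of_reflTransGen (P := fun _ => True)
    (fun _ _ ⟨α, h⟩ => ⟨α, trivial, h⟩) hst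
  obtain ⟨ν, hν, -⟩ := Steps.exists_of_reflTransGen (P := fun _ => True)
    (fun _ _ ⟨α, h⟩ => ⟨α, trivial, h⟩) hsu
  obtain ⟨v, ρ, ρ', hρ, hρ', -⟩ := hLD.exists_decreasing_valley hκ hν
  exact ⟨v, hρ.reflTransGen, hρ'.reflTransGen⟩

end Rewriting

/-- Every locally decreasing ARS is confluent: if `>` (here `gt`) is a well-founded
strict order on the index set `I` and every local peak `t ←_α s →_β u` can be
completed in the locally decreasing fashion
`⇣_α^* · →_β^= · ⇣_{αβ}^*` from `t`, meeting `⇣_β^* · →_α^= · ⇣_{αβ}^*` from `u`,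
then the union of all the relations `→_α` is confluent. -/
theorem locally_decreasing_implies_confluent {A I : Type*}
    (r : I → A → A → Prop) (gt : I → I → Prop)
    (hwf : WellFounded (fun a b => gt b a))
    (htrans : Transitive gt) (hirr : Irreflexive gt)
    (hLD : ∀ α β s t u, r α s t → r β s u →
      ∃ t₁ t₂ u₁ u₂ v,
        ReflTransGen (below r gt α) t t₁ ∧
        ReflGen (r β) t₁ t₂ ∧
        ReflTransGen (fun a b => below r gt α a b ∨ below r gt β a b) t₂ v ∧
        ReflTransGen (below r gt β) u u₁ ∧
        ReflGen (r α) u₁ u₂ ∧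
        ReflTransGen (fun a b => below r gt α a b ∨ below r gt β a b) u₂ v) :
    Confluent (unionRel r) := by
  let _ : IsStrictOrder I (fun a b => gt b a) :=
    { irrefl := hirr, trans := fun _ _ _ h₁ h₂ => htrans h₂ h₁ }
  let _ := partialOrderOfSO (fun a b => gt b a)
  have : WellFoundedLT I := ⟨hwf⟩
  exact LocallyDecreasing.confluent hLD
end

section
/- Every extended locally decreasing abstract rewrite system is confluent. That is, if ⟨A, {→_α}_{α∈I}⟩ is an ARS, > is a well-founded strict order on I, and ≥ is a quasi-order on I satisfying ≥ · > · ≥ ⊆ >, such that LD_{(>,≥)}(α,β) holds for all α, β ∈ I, then the union → of all the relations →_α is confluent. -/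
open Relation

/-- `⇣̂_α`: the union of `→_β` over all labels `β` with `β ≤ α` (i.e. `ge α β`)
or `β < α` (i.e. `gt α β`).  Note `>` need not be contained in `≥`. -/
def belowEq {A I : Type*} (r : I → A → A → Prop) (gt ge : I → I → Prop) (α : I) :
    A → A → Prop :=
  fun a b => ∃ β, (ge α β ∨ gt α β) ∧ r β a b

/-!
Ranking the labels by their rank in the well-founded order `gt`, and letting a step of label `γ`
also count as a step of every label `α` with `ge α γ`, turns an extended locally decreasing system
into a locally decreasing one labelled by ordinals, a well-founded linear order.

For such systems we follow van Oostrom. A reduction sequence is measured by its lexicographic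
maximum (the multiset of its labels that are at least every earlier label), and multisets are
compared colexicographically, a well-founded order. A peak of two sequences `a σ` and `b τ` with
`a ≤ b` is closed by induction on the sum of their measures: the local diagram of the first two
steps yields legs `lt` and `lu`; one recursive call closes `σ` against `lt`, giving legs `σ₁` and
`ρ`, and a second closes `τ` against `lu ρ`. Both calls are smaller because every leg of a valley
produced by the induction measures at most the peak it closes.
-/

namespace Multiset

variable {L : Type*} [LinearOrder L]

/-- For a linear order this is the Dershowitz–Manna order: multiplicities are compared at the
largest element where they differ. -/
noncomputable def colex (M : Multiset L) : Colex (L →₀ ℕ) := toColex M.toFinsupp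

@[simp] lemma colex_add (M N : Multiset L) : colex (M + N) = colex M + colex N := by
  simp [colex]

lemma colex_injective : Function.Injective (colex (L := L)) :=
  toColex.injective.comp toFinsupp.injective

lemma colex_lt_colex_iff {M N : Multiset L} :
    colex M < colex N ↔ ∃ i, (∀ j, i < j → M.count j = N.count j) ∧ M.count i < N.count i :=
  Iff.rfl

@[simp] lemma colex_zero : colex (0 : Multiset L) = 0 := by
  simp [colex]

lemma colex_mono {M N : Multiset L} (h : M ≤ N) : colex M ≤ colex N :=
  Finsupp.toColex_monotone (toFinsupp_strictMono.monotone h)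

lemma colex_lt_of_forall_lt {M N : Multiset L} {x : L} (hx : x ∈ N) (hM : ∀ y ∈ M, y < x) :
    colex M < colex N := by
  refine lt_of_not_ge fun hNM => ?_
  obtain hNM | hNM := hNM.lt_or_eq
  · obtain ⟨i, hgt, hi⟩ := colex_lt_colex_iff.1 hNM
    have hix : i < x := hM i (count_pos.1 (by omega))
    have hxM : x ∉ M := fun h => (hM x h).false
    exact hxM (count_pos.1 ((hgt x hix) ▸ count_pos.2 hx))
  · exact (hM x (colex_injective hNM ▸ hx)).false

lemma exists_le_of_colex_le {M N : Multiset L} (h : colex M ≤ colex N) {x : L} (hx : x ∈ M) :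
    ∃ y ∈ N, x ≤ y := by
  by_contra! hN
  exact (colex_lt_of_forall_lt hx hN).not_ge h

lemma colex_filter_le_filter {p : L → Prop} [DecidablePred p] (hp : Monotone p)
    {M N : Multiset L} (h : colex M ≤ colex N) : colex (M.filter p) ≤ colex (N.filter p) := by
  obtain h | h := h.lt_or_eq
  · obtain ⟨i, hgt, hi⟩ := colex_lt_colex_iff.1 h
    by_cases hpi : p i
    · refine (colex_lt_colex_iff.2 ⟨i, fun j hj => ?_, ?_⟩).le
      · simp [count_filter, hgt j hj]
      · simpa [count_filter, hpi] using hi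
    · refine (congrArg colex (ext.2 fun j => ?_)).le
      by_cases hpj : p j
      · have hij : i < j := lt_of_not_ge fun hji => hpi (hp hji hpj)
        simp [hpj, hgt j hij]
      · simp [hpj]
  · rw [colex_injective h]

lemma colex_lt_of_filter_lt {p : L → Prop} [DecidablePred p] (hp : Monotone p)
    {M N : Multiset L} (h : colex (M.filter p) < colex (N.filter p)) : colex M < colex N := by
  obtain ⟨i, hgt, hi⟩ := colex_lt_colex_iff.1 h
  have hpi : p i := by
    by_contra hpi
    simp [hpi] at hi
  refine colex_lt_colex_iff.2 ⟨i, fun j hj => ?_, ?_⟩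
  · simpa [count_filter, hp hj.le hpi] using hgt j hj
  · simpa [count_filter, hpi] using hi

lemma colex_singleton_pos (a : L) : 0 < colex ({a} : Multiset L) := by
  simpa using colex_lt_of_forall_lt (mem_singleton_self a) (M := 0) (by simp)

end Multiset

namespace DecreasingDiagrams

section Paths

variable {L A : Type*}

inductive LabelledPath (q : L → A → A → Prop) : A → List L → A → Prop
  | nil (s : A) : LabelledPath q s [] s
  | cons {s t u : A} {l : L} {ls : List L} :
      q l s t → LabelledPath q t ls u → LabelledPath q s (l :: ls) u

namespace LabelledPath

variable {q : L → A → A → Prop}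

lemma append {s t u : A} {xs ys : List L} (h₁ : LabelledPath q s xs t)
    (h₂ : LabelledPath q t ys u) : LabelledPath q s (xs ++ ys) u := by
  induction h₁ with
  | nil => exact h₂
  | cons hst _ ih => exact cons hst (ih h₂)

lemma reflTransGen {s t : A} {ls : List L} (h : LabelledPath q s ls t) :
    ReflTransGen (unionRel q) s t := by
  induction h with
  | nil => exact .refl
  | cons hst _ ih => exact .head ⟨_, hst⟩ ih

lemma exists_of_reflTransGen {R : A → A → Prop} {P : L → Prop}
    (hR : ∀ x y, R x y → ∃ l, P l ∧ q l x y) {s t : A} (h : ReflTransGen R s t) :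
    ∃ ls, LabelledPath q s ls t ∧ ∀ l ∈ ls, P l := by
  induction h using ReflTransGen.head_induction_on with
  | refl => exact ⟨[], nil _, by simp⟩
  | head hxy _ ih =>
    obtain ⟨ls, hls, hP⟩ := ih
    obtain ⟨l, hl, hq⟩ := hR _ _ hxy
    exact ⟨l :: ls, cons hq hls, by simpa [hl] using hP⟩

end LabelledPath

end Paths

section Confluence

open Multiset

variable {L : Type*} [LinearOrder L]

/-- The labels of the list that are at least every earlier label. -/
def lexMax : List L → Multiset L
  | [] => 0
  | a :: l => a ::ₘ (lexMax l).filter (a ≤ ·)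

@[simp] lemma lexMax_nil : lexMax ([] : List L) = 0 := rfl

lemma lexMax_cons (a : L) (l : List L) : lexMax (a :: l) = a ::ₘ (lexMax l).filter (a ≤ ·) := rfl

lemma lexMax_append (xs ys : List L) :
    lexMax (xs ++ ys) = lexMax xs + (lexMax ys).filter (fun y => ∀ x ∈ xs, x ≤ y) := by
  induction xs with
  | nil => simp
  | cons a xs ih =>
    simp only [List.cons_append, lexMax_cons, ih, filter_add, filter_filter, cons_add]
    congr 2
    exact filter_congr fun y _ => by simp

lemma mem_of_mem_lexMax {l : List L} {x : L} (hx : x ∈ lexMax l) : x ∈ l := by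
  induction l with
  | nil => simp at hx
  | cons a l ih =>
    rw [lexMax_cons, mem_cons, mem_filter] at hx
    rcases hx with rfl | ⟨hx, -⟩
    · exact List.mem_cons_self
    · exact List.mem_cons_of_mem a (ih hx)

lemma exists_mem_lexMax_le {l : List L} {x : L} (hx : x ∈ l) : ∃ y ∈ lexMax l, x ≤ y := by
  induction l with
  | nil => simp at hx
  | cons a l ih =>
    rcases List.mem_cons.1 hx with rfl | hx
    · exact ⟨x, mem_cons_self _ _, le_rfl⟩
    obtain ⟨y, hy, hxy⟩ := ih hx
    by_cases hay : a ≤ y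
    · exact ⟨y, mem_cons_of_mem (mem_filter.2 ⟨hy, hay⟩), hxy⟩
    · exact ⟨a, mem_cons_self _ _, hxy.trans (le_of_not_ge hay)⟩

lemma filter_lexMax_eq_zero {l : List L} {c : L} (h : ∀ x ∈ l, x < c) :
    (lexMax l).filter (c ≤ ·) = 0 :=
  filter_eq_nil.2 fun x hx => (h x (mem_of_mem_lexMax hx)).not_ge

lemma filter_lexMax_append_of_forall_lt {g : List L} {c : L} (hg : ∀ x ∈ g, x < c)
    (l : List L) : (lexMax (g ++ l)).filter (c ≤ ·) = (lexMax l).filter (c ≤ ·) := by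
  rw [lexMax_append, filter_add, filter_lexMax_eq_zero hg, zero_add, filter_filter]
  exact filter_congr fun y _ => ⟨fun h => h.1, fun h => ⟨h, fun x hx => (hg x hx).le.trans h⟩⟩

lemma exists_le_of_colex_lexMax_le {l : List L} {M : Multiset L} (h : colex (lexMax l) ≤ colex M)
    {x : L} (hx : x ∈ l) : ∃ y ∈ M, x ≤ y := by
  obtain ⟨z, hz, hxz⟩ := exists_mem_lexMax_le hx
  obtain ⟨y, hy, hzy⟩ := exists_le_of_colex_le h hz
  exact ⟨y, hy, hxz.trans hzy⟩

lemma colex_filter_lexMax_le_of_append {xs ys zs : List L}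
    (h : colex (lexMax (xs ++ ys)) ≤ colex (lexMax zs + lexMax xs)) :
    colex ((lexMax ys).filter (fun y => ∀ x ∈ xs, x ≤ y)) ≤ colex (lexMax zs) := by
  rw [lexMax_append, colex_add, colex_add, add_comm (colex (lexMax zs))] at h
  exact le_of_add_le_add_left h

lemma le_of_mem_lexMax_cons {a x : L} {l : List L} (hx : x ∈ lexMax (a :: l)) : a ≤ x := by
  rw [lexMax_cons, mem_cons, mem_filter] at hx
  rcases hx with rfl | ⟨-, hx⟩
  exacts [le_rfl, hx]

lemma filter_lexMax_cons_of_le {c b : L} (h : c ≤ b) (l : List L) :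
    (lexMax (b :: l)).filter (c ≤ ·) = lexMax (b :: l) :=
  filter_eq_self.2 fun _ hx => h.trans (le_of_mem_lexMax_cons hx)

lemma filter_lexMax_cons {a b : L} (hab : a ≤ b) (l : List L) :
    (lexMax (a :: l)).filter (b ≤ ·) =
      ({a} : Multiset L).filter (b ≤ ·) + (lexMax l).filter (b ≤ ·) := by
  rw [lexMax_cons, ← singleton_add, filter_add, filter_filter]
  exact congrArg _ (filter_congr fun y _ => ⟨fun h => h.1, fun h => ⟨h, hab.trans h⟩⟩)

lemma colex_filter_lexMax_le_of_shape {c e : L} {g m d : List L} (hg : ∀ x ∈ g, x < c)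
    (hm : m = [] ∨ m = [e]) (hd : ∀ x ∈ d, x < c ⊔ e) :
    colex ((lexMax (g ++ (m ++ d))).filter (c ≤ ·)) ≤
      colex (({e} : Multiset L).filter (c ≤ ·)) := by
  rw [filter_lexMax_append_of_forall_lt hg]
  rcases hm with rfl | rfl
  · rw [List.nil_append]
    by_cases hce : c ≤ e
    · rw [filter_singleton, if_pos hce]
      refine (colex_lt_of_forall_lt (mem_singleton_self e) fun x hx => ?_).le
      simpa [sup_eq_right.2 hce] using hd x (mem_of_mem_lexMax (mem_filter.1 hx).1)
    · have hd' : ∀ x ∈ d, x < c := by simpa [sup_eq_left.2 (le_of_not_ge hce)] using hd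
      rw [filter_lexMax_eq_zero hd']
      exact colex_mono (zero_le _)
  · have hnone : (lexMax d).filter (fun x => c ≤ x ∧ e ≤ x) = 0 :=
      filter_eq_nil.2 fun x hx hx' =>
        (lt_sup_iff.1 (hd x (mem_of_mem_lexMax hx))).elim hx'.1.not_gt hx'.2.not_gt
    rw [List.singleton_append, lexMax_cons, ← singleton_add, filter_add, filter_filter, hnone,
      add_zero]

section Peak

variable {a b : L} {σ τ lt lu ρ : List L}

lemma colex_lexMax_add_lt_cons_add_cons (hab : a ≤ b)
    (hlt : colex ((lexMax lt).filter (a ≤ ·)) ≤ colex {b}) :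
    colex (lexMax σ + lexMax lt) < colex (lexMax (a :: σ) + lexMax (b :: τ)) := by
  refine colex_lt_of_filter_lt (p := (a ≤ ·)) (fun _ _ h h' => h'.trans h) ?_
  rw [filter_add, filter_add, filter_lexMax_cons_of_le le_rfl, filter_lexMax_cons_of_le hab,
    colex_add, colex_add]
  calc colex ((lexMax σ).filter (a ≤ ·)) + colex ((lexMax lt).filter (a ≤ ·))
      ≤ colex ((lexMax σ).filter (a ≤ ·)) + colex {b} := by gcongr
    _ < colex {a} + colex ((lexMax σ).filter (a ≤ ·)) + colex {b} := by
        rw [add_comm (colex {a})]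
        gcongr
        exact lt_add_of_pos_right _ (colex_singleton_pos a)
    _ ≤ colex (lexMax (a :: σ)) + colex (lexMax (b :: τ)) := by
        rw [lexMax_cons, ← singleton_add, colex_add]
        have : colex ({b} : Multiset L) ≤ colex (lexMax (b :: τ)) :=
          colex_mono (singleton_le.2 (mem_cons_self _ _))
        gcongr

lemma colex_filter_lexMax_append_le (hlt : ∀ x ∈ lt, x ≤ b)
    (hlu : colex ((lexMax lu).filter (b ≤ ·)) ≤ colex (({a} : Multiset L).filter (b ≤ ·)))
    (hρ : colex ((lexMax ρ).filter (fun y => ∀ x ∈ lt, x ≤ y)) ≤ colex (lexMax σ)) :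
    colex ((lexMax (lu ++ ρ)).filter (b ≤ ·)) ≤
      colex (({a} : Multiset L).filter (b ≤ ·)) + colex ((lexMax σ).filter (b ≤ ·)) := by
  rw [lexMax_append, filter_add, colex_add]
  have hsub : ((lexMax ρ).filter (fun y => ∀ x ∈ lu, x ≤ y)).filter (b ≤ ·) ≤
      ((lexMax ρ).filter (fun y => ∀ x ∈ lt, x ≤ y)).filter (b ≤ ·) := by
    refine (filter_le_filter _ (filter_le _ _)).trans (le_of_eq ?_)
    rw [filter_filter]
    exact filter_congr fun y _ => ⟨fun h => ⟨h, fun x hx => (hlt x hx).trans h⟩, fun h => h.1⟩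
  gcongr
  exact (colex_mono hsub).trans (colex_filter_le_filter (fun _ _ h h' => h'.trans h) hρ)

lemma colex_lexMax_add_append_lt_cons_add_cons (hab : a ≤ b)
    (h : colex ((lexMax (lu ++ ρ)).filter (b ≤ ·)) ≤
      colex (({a} : Multiset L).filter (b ≤ ·)) + colex ((lexMax σ).filter (b ≤ ·))) :
    colex (lexMax τ + lexMax (lu ++ ρ)) < colex (lexMax (a :: σ) + lexMax (b :: τ)) := by
  refine colex_lt_of_filter_lt (p := (b ≤ ·)) (fun _ _ h h' => h'.trans h) ?_
  rw [filter_add, filter_add, filter_lexMax_cons hab, filter_lexMax_cons_of_le le_rfl,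
    lexMax_cons b, ← singleton_add]
  simp only [colex_add]
  calc colex ((lexMax τ).filter (b ≤ ·)) + colex ((lexMax (lu ++ ρ)).filter (b ≤ ·))
      ≤ colex ((lexMax τ).filter (b ≤ ·)) +
          (colex (({a} : Multiset L).filter (b ≤ ·)) + colex ((lexMax σ).filter (b ≤ ·))) := by
        gcongr
    _ < _ + colex {b} := lt_add_of_pos_right _ (colex_singleton_pos b)
    _ = _ := by abel

lemma colex_lexMax_cons_append_le (hab : a ≤ b) {τ₁ : List L}
    (hτ₁ : colex (lexMax (τ ++ τ₁)) ≤ colex (lexMax τ + lexMax (lu ++ ρ)))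
    (h : colex ((lexMax (lu ++ ρ)).filter (b ≤ ·)) ≤
      colex (({a} : Multiset L).filter (b ≤ ·)) + colex ((lexMax σ).filter (b ≤ ·))) :
    colex (lexMax ((b :: τ) ++ τ₁)) ≤ colex (lexMax (a :: σ) + lexMax (b :: τ)) := by
  have hτ₁b := colex_filter_le_filter (p := (b ≤ ·)) (fun _ _ h h' => h'.trans h) hτ₁
  rw [filter_add, colex_add] at hτ₁b
  rw [List.cons_append, lexMax_cons, ← singleton_add]
  calc colex ({b} + (lexMax (τ ++ τ₁)).filter (b ≤ ·))
      ≤ colex {b} + (colex ((lexMax τ).filter (b ≤ ·)) +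
          (colex (({a} : Multiset L).filter (b ≤ ·)) + colex ((lexMax σ).filter (b ≤ ·)))) := by
        rw [colex_add]
        gcongr
        exact hτ₁b.trans (by gcongr)
    _ = colex ((lexMax (a :: σ) + lexMax (b :: τ)).filter (b ≤ ·)) := by
        rw [filter_add, filter_lexMax_cons hab, filter_lexMax_cons_of_le le_rfl, lexMax_cons b,
          ← singleton_add]
        simp only [colex_add]
        abel
    _ ≤ _ := colex_mono (filter_le _ _)

lemma le_of_colex_lexMax_append_le (hlt : ∀ x ∈ lt, x ≤ b) (hlu : ∀ x ∈ lu, x ≤ b)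
    (hρ : colex (lexMax (lt ++ ρ)) ≤ colex (lexMax σ + lexMax lt)) {y : L} (hby : b ≤ y)
    (hσy : ∀ x ∈ σ, x ≤ y) : ∀ x ∈ lu ++ ρ, x ≤ y := by
  intro x hx
  rcases List.mem_append.1 hx with hx | hx
  · exact (hlu x hx).trans hby
  obtain ⟨z, hz, hxz⟩ := exists_le_of_colex_lexMax_le hρ (List.mem_append_right lt hx)
  rcases mem_add.1 hz with hz | hz
  · exact hxz.trans (hσy z (mem_of_mem_lexMax hz))
  · exact hxz.trans ((hlt z (mem_of_mem_lexMax hz)).trans hby)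

lemma colex_filter_lexMax_add_le (hab : a ≤ b) {xs : List L} {Y : Multiset L}
    (hlt : colex ((lexMax lt).filter (a ≤ ·)) ≤ colex {b})
    (hxs : colex (lexMax xs) ≤ colex (lexMax σ + lexMax lt))
    (hY : ∀ y ∈ Y, ∀ x ∈ xs, x ≤ y)
    (hYb : colex (Y.filter (b ≤ ·)) ≤ colex ((lexMax τ).filter (b ≤ ·))) :
    colex ((lexMax xs + Y).filter (a ≤ ·)) ≤
      colex ((lexMax σ).filter (a ≤ ·) + lexMax (b :: τ)) := by
  by_cases hb : ∃ x ∈ xs, b ≤ x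
  · obtain ⟨x, hx, hbx⟩ := hb
    have hY_eq : Y.filter (b ≤ ·) = Y := filter_eq_self.2 fun y hy => hbx.trans (hY y hy x hx)
    have hxs_a := colex_filter_le_filter (p := (a ≤ ·)) (fun _ _ h h' => h'.trans h) hxs
    rw [filter_add, colex_add] at hxs_a
    rw [filter_add, lexMax_cons b, ← singleton_add]
    simp only [colex_add]
    rw [← add_assoc]
    gcongr
    · exact hxs_a.trans (by gcongr)
    · exact (colex_mono (filter_le _ _)).trans ((congrArg colex hY_eq).ge.trans hYb)
  · push Not at hb
    refine (colex_lt_of_filter_lt (p := (b ≤ ·)) (fun _ _ h h' => h'.trans h) ?_).le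
    have hfilter : ((lexMax xs + Y).filter (a ≤ ·)).filter (b ≤ ·) = Y.filter (b ≤ ·) := by
      rw [filter_filter,
        filter_congr (q := (b ≤ ·)) fun x _ => ⟨And.left, fun h => ⟨h, hab.trans h⟩⟩,
        filter_add, filter_lexMax_eq_zero hb, zero_add]
    rw [hfilter]
    calc colex (Y.filter (b ≤ ·))
        ≤ colex ((lexMax τ).filter (b ≤ ·)) := hYb
      _ < colex {b} + colex ((lexMax τ).filter (b ≤ ·)) :=
          lt_add_of_pos_left _ (colex_singleton_pos b)
      _ = colex ((lexMax (b :: τ)).filter (b ≤ ·)) := by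
          rw [filter_lexMax_cons_of_le le_rfl, lexMax_cons, ← singleton_add, colex_add]
      _ ≤ _ := colex_mono (by rw [filter_add]; exact le_add_left le_rfl)

lemma colex_lexMax_cons_append_append_le (hab : a ≤ b) {σ₁ ρ₂ : List L}
    (hlt : colex ((lexMax lt).filter (a ≤ ·)) ≤ colex {b})
    (hσ₁ : colex (lexMax (σ ++ σ₁)) ≤ colex (lexMax σ + lexMax lt))
    (hdom : ∀ y, b ≤ y → (∀ x ∈ σ, x ≤ y) → ∀ x ∈ lu ++ ρ, x ≤ y)
    (hρ₂ : colex ((lexMax ρ₂).filter (fun y => ∀ x ∈ lu ++ ρ, x ≤ y)) ≤ colex (lexMax τ)) :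
    colex (lexMax ((a :: σ) ++ (σ₁ ++ ρ₂))) ≤ colex (lexMax (a :: σ) + lexMax (b :: τ)) := by
  have hρ₂b : colex (((lexMax ρ₂).filter (fun y => ∀ x ∈ σ ++ σ₁, x ≤ y)).filter (b ≤ ·)) ≤
      colex ((lexMax τ).filter (b ≤ ·)) := by
    refine (colex_mono ?_).trans (colex_filter_le_filter (fun _ _ h h' => h'.trans h) hρ₂)
    rw [filter_filter, filter_filter]
    exact monotone_filter_right _ fun y ⟨hby, hy⟩ =>
      ⟨hby, hdom y hby fun x hx => hy x (List.mem_append_left _ hx)⟩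
  rw [List.cons_append, ← List.append_assoc, lexMax_cons, lexMax_append, lexMax_cons a σ,
    ← singleton_add, ← singleton_add, add_assoc, colex_add, colex_add]
  gcongr
  exact colex_filter_lexMax_add_le hab hlt hσ₁ (fun _ hy => (mem_filter.1 hy).2) hρ₂b

end Peak

variable {A : Type*} (q : L → A → A → Prop)

/-- The completion `⇣_a^* · →_b^= · ⇣_{a⊔b}^*` of a local diagram; over a linear order
`⇣_a ∪ ⇣_b = ⇣_{a⊔b}`. -/
def DecreasingCompletion (a b : L) : A → A → Prop :=
  Comp (ReflTransGen (below q (· > ·) a))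
    (Comp (ReflGen (q b)) (ReflTransGen (below q (· > ·) (a ⊔ b))))

def LocallyDecreasing : Prop :=
  ∀ a b s t u, q a s t → q b s u →
    ∃ v, DecreasingCompletion q a b t v ∧ DecreasingCompletion q b a u v

variable {q}

lemma DecreasingCompletion.of_reflTransGen {a b : L} {R₁ R₂ R₃ : A → A → Prop}
    (h₁ : ∀ x y, R₁ x y → below q (· > ·) a x y)
    (h₂ : ∀ x y, R₂ x y → q b x y ∨ below q (· > ·) (a ⊔ b) x y)
    (h₃ : ∀ x y, R₃ x y → below q (· > ·) (a ⊔ b) x y) {t t₁ t₂ v : A}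
    (ht₁ : ReflTransGen R₁ t t₁) (ht₂ : ReflGen R₂ t₁ t₂) (ht₃ : ReflTransGen R₃ t₂ v) :
    DecreasingCompletion q a b t v := by
  have ht₁' := ReflTransGen.mono h₁ _ _ ht₁
  have ht₃' := ReflTransGen.mono h₃ _ _ ht₃
  rcases ht₂ with _ | hstep
  · exact ⟨t₁, ht₁', t₁, .refl, ht₃'⟩
  · rcases h₂ _ _ hstep with hq | hbelow
    · exact ⟨t₁, ht₁', t₂, .single hq, ht₃'⟩
    · exact ⟨t₁, ht₁', t₁, .refl, .head hbelow ht₃'⟩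

lemma DecreasingCompletion.exists_labelledPath {c e : L} {t v : A}
    (h : DecreasingCompletion q c e t v) :
    ∃ ls, LabelledPath q t ls v ∧ (∀ x ∈ ls, x ≤ c ⊔ e) ∧
      colex ((lexMax ls).filter (c ≤ ·)) ≤ colex (({e} : Multiset L).filter (c ≤ ·)) := by
  obtain ⟨t₁, ht₁, t₂, ht₂, ht₃⟩ := h
  have hbelow : ∀ a x y, below q (· > ·) a x y → ∃ l, l < a ∧ q l x y :=
    fun _ _ _ ⟨l, hl, h⟩ => ⟨l, hl, h⟩
  obtain ⟨g, hg, hg_lt⟩ := LabelledPath.exists_of_reflTransGen (hbelow c) ht₁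
  obtain ⟨d, hd, hd_lt⟩ := LabelledPath.exists_of_reflTransGen (hbelow (c ⊔ e)) ht₃
  obtain ⟨m, hm, hm_eq⟩ : ∃ m, LabelledPath q t₁ m t₂ ∧ (m = [] ∨ m = [e]) := by
    rcases ht₂ with _ | hstep
    · exact ⟨[], .nil _, .inl rfl⟩
    · exact ⟨[e], .cons hstep (.nil _), .inr rfl⟩
  refine ⟨g ++ (m ++ d), hg.append (hm.append hd), fun x hx => ?_,
    colex_filter_lexMax_le_of_shape hg_lt hm_eq hd_lt⟩
  rcases List.mem_append.1 hx with hx | hx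
  · exact (hg_lt x hx).le.trans le_sup_left
  rcases List.mem_append.1 hx with hx | hx
  · rcases hm_eq with rfl | rfl
    · simp at hx
    · exact (List.mem_singleton.1 hx).trans_le le_sup_right
  · exact (hd_lt x hx).le

variable (q) in
def HasDecreasingValley (t u : A) (σ τ : List L) : Prop :=
  ∃ v σ₁ τ₁, LabelledPath q t σ₁ v ∧ LabelledPath q u τ₁ v ∧
    colex (lexMax (σ ++ σ₁)) ≤ colex (lexMax σ + lexMax τ) ∧
    colex (lexMax (τ ++ τ₁)) ≤ colex (lexMax σ + lexMax τ)

lemma HasDecreasingValley.symm {t u : A} {σ τ : List L} (h : HasDecreasingValley q t u σ τ) :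
    HasDecreasingValley q u t τ σ := by
  obtain ⟨v, σ₁, τ₁, hσ₁, hτ₁, h₁, h₂⟩ := h
  rw [add_comm] at h₁ h₂
  exact ⟨v, τ₁, σ₁, hτ₁, hσ₁, h₂, h₁⟩

lemma hasDecreasingValley_cons_cons (hLD : LocallyDecreasing q) {a b : L} (hab : a ≤ b)
    {s t₀ t u₀ u : A} {σ τ : List L}
    (ih : ∀ s' t' u' σ' τ', LabelledPath q s' σ' t' → LabelledPath q s' τ' u' →
      colex (lexMax σ' + lexMax τ') < colex (lexMax (a :: σ) + lexMax (b :: τ)) →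
      HasDecreasingValley q t' u' σ' τ')
    (ha : q a s t₀) (hσ : LabelledPath q t₀ σ t) (hb : q b s u₀) (hτ : LabelledPath q u₀ τ u) :
    HasDecreasingValley q t u (a :: σ) (b :: τ) := by
  obtain ⟨v₀, hct, hcu⟩ := hLD a b s t₀ u₀ ha hb
  obtain ⟨lt, hlt, hlt_le, hlt_filter⟩ := hct.exists_labelledPath
  obtain ⟨lu, hlu, hlu_le, hlu_filter⟩ := hcu.exists_labelledPath
  rw [sup_eq_right.2 hab] at hlt_le
  rw [sup_eq_left.2 hab] at hlu_le
  rw [filter_singleton, if_pos hab] at hlt_filter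
  obtain ⟨w, σ₁, ρ, hσ₁, hρ, hσσ₁, hltρ⟩ :=
    ih _ _ _ σ lt hσ hlt (colex_lexMax_add_lt_cons_add_cons hab hlt_filter)
  have hluρ := colex_filter_lexMax_append_le hlt_le hlu_filter
    (colex_filter_lexMax_le_of_append hltρ)
  obtain ⟨z, τ₁, ρ₂, hτ₁, hρ₂, hττ₁, hρρ₂⟩ :=
    ih _ _ _ τ (lu ++ ρ) hτ (hlu.append hρ) (colex_lexMax_add_append_lt_cons_add_cons hab hluρ)
  refine ⟨z, σ₁ ++ ρ₂, τ₁, hσ₁.append hρ₂, hτ₁, ?_,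
    colex_lexMax_cons_append_le hab hττ₁ hluρ⟩
  exact colex_lexMax_cons_append_append_le hab hlt_filter hσσ₁
    (fun _ hby hσy => le_of_colex_lexMax_append_le hlt_le hlu_le hltρ hby hσy)
    (colex_filter_lexMax_le_of_append hρρ₂)

theorem LabelledPath.hasDecreasingValley [WellFoundedLT L] (hLD : LocallyDecreasing q)
    {s t u : A} {σ τ : List L} (hσ : LabelledPath q s σ t) (hτ : LabelledPath q s τ u) :
    HasDecreasingValley q t u σ τ := by
  generalize hM : colex (lexMax σ + lexMax τ) = M
  induction M using WellFoundedLT.induction generalizing s t u σ τ with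
  | _ M ih =>
  subst hM
  cases hσ with
  | nil => exact ⟨u, τ, [], hτ, .nil u, by simp, by simp⟩
  | @cons _ _ _ a _ ha hσ =>
    cases hτ with
    | nil => exact ⟨t, [], _, .nil t, .cons ha hσ, by simp, by simp⟩
    | @cons _ _ _ b _ hb hτ =>
      rcases le_total a b with hab | hba
      · exact hasDecreasingValley_cons_cons hLD hab
          (fun _ _ _ _ _ h₁ h₂ hlt => ih _ hlt h₁ h₂ rfl) ha hσ hb hτ
      · refine (hasDecreasingValley_cons_cons hLD hba
          (fun _ _ _ _ _ h₁ h₂ hlt => ih _ ?_ h₁ h₂ rfl) hb hτ ha hσ).symm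
        rwa [add_comm (lexMax (a :: _))]

theorem confluent_of_locallyDecreasing [WellFoundedLT L] (hLD : LocallyDecreasing q) :
    Confluent (unionRel q) := by
  intro s t u hst hsu
  have hunion : ∀ x y, unionRel q x y → ∃ l, True ∧ q l x y := fun _ _ ⟨l, h⟩ => ⟨l, trivial, h⟩
  obtain ⟨σ, hσ, -⟩ := LabelledPath.exists_of_reflTransGen hunion hst
  obtain ⟨τ, hτ, -⟩ := LabelledPath.exists_of_reflTransGen hunion hsu
  obtain ⟨v, σ₁, τ₁, hσ₁, hτ₁, -⟩ := hσ.hasDecreasingValley hLD hτ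
  exact ⟨v, hσ₁.reflTransGen, hτ₁.reflTransGen⟩

end Confluence

section Relabel

variable {I L A : Type*}

def ExtendedLocallyDecreasing (r : I → A → A → Prop) (gt ge : I → I → Prop) : Prop :=
  ∀ α β s t u, r α s t → r β s u →
    ∃ t₁ t₂ u₁ u₂ v,
      ReflTransGen (below r gt α) t t₁ ∧
      ReflGen (belowEq r gt ge β) t₁ t₂ ∧
      ReflTransGen (fun a b => below r gt α a b ∨ below r gt β a b) t₂ v ∧
      ReflTransGen (below r gt β) u u₁ ∧
      ReflGen (belowEq r gt ge α) u₁ u₂ ∧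
      ReflTransGen (fun a b => below r gt α a b ∨ below r gt β a b) u₂ v

/-- A step of label `γ` gets label `f α` for every `α` with `ge α γ`: this is what lets the
`belowEq`-steps of an extended local diagram stand in for steps of the peak's own label. -/
def relabel (r : I → A → A → Prop) (ge : I → I → Prop) (f : I → L) : L → A → A → Prop :=
  fun o x y => ∃ α, f α = o ∧ ∃ γ, ge α γ ∧ r γ x y

variable {r : I → A → A → Prop} {gt ge : I → I → Prop} {f : I → L}

lemma unionRel_relabel (hge_refl : ∀ α, ge α α) : unionRel (relabel r ge f) = unionRel r := by
  ext x y
  constructor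
  · rintro ⟨-, -, -, γ, -, h⟩
    exact ⟨γ, h⟩
  · rintro ⟨α, h⟩
    exact ⟨f α, α, rfl, α, hge_refl α, h⟩

lemma locallyDecreasing_relabel [LinearOrder L] (hf : ∀ α β, gt α β → f β < f α)
    (hge_refl : ∀ α, ge α α) (hge_trans : ∀ {α β γ}, ge α β → ge β γ → ge α γ)
    (hcompat : ∀ a b c d, ge a b → gt b c → ge c d → gt a d)
    (hLD : ExtendedLocallyDecreasing r gt ge) :
    LocallyDecreasing (relabel r ge f) := by
  have hbelow : ∀ {α γ}, ge α γ → ∀ x y, below r gt γ x y →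
      below (relabel r ge f) (· > ·) (f α) x y := by
    rintro α γ hαγ x y ⟨ρ, hγρ, h⟩
    exact ⟨f ρ, hf α ρ (hcompat α γ ρ ρ hαγ hγρ (hge_refl ρ)), ρ, rfl, ρ, hge_refl ρ, h⟩
  have hbelowEq : ∀ {β δ}, ge β δ → ∀ x y, belowEq r gt ge δ x y →
      relabel r ge f (f β) x y ∨ below (relabel r ge f) (· > ·) (f β) x y := by
    rintro β δ hβδ x y ⟨ρ, hδρ | hδρ, h⟩
    · exact .inl ⟨β, rfl, ρ, hge_trans hβδ hδρ, h⟩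
    · exact .inr (hbelow (hge_refl β) x y ⟨ρ, hcompat β δ ρ ρ hβδ hδρ (hge_refl ρ), h⟩)
  have hmono : ∀ {o o'}, o ≤ o' → ∀ x y, below (relabel r ge f) (· > ·) o x y →
      below (relabel r ge f) (· > ·) o' x y :=
    fun hoo' _ _ ⟨l, hl, h⟩ => ⟨l, lt_of_lt_of_le hl hoo', h⟩
  rintro _ _ s t u ⟨α, rfl, γ, hαγ, hγ⟩ ⟨β, rfl, δ, hβδ, hδ⟩
  obtain ⟨t₁, t₂, u₁, u₂, v, ht₁, ht₂, ht₃, hu₁, hu₂, hu₃⟩ := hLD γ δ s t u hγ hδ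
  refine ⟨v, DecreasingCompletion.of_reflTransGen (hbelow hαγ)
      (fun x y h => (hbelowEq hβδ x y h).imp_right (hmono le_sup_right x y)) ?_ ht₁ ht₂ ht₃,
    DecreasingCompletion.of_reflTransGen (hbelow hβδ)
      (fun x y h => (hbelowEq hαγ x y h).imp_right (hmono le_sup_right x y)) ?_ hu₁ hu₂ hu₃⟩
  · rintro x y (h | h)
    · exact hmono le_sup_left x y (hbelow hαγ x y h)
    · exact hmono le_sup_right x y (hbelow hβδ x y h)
  · rintro x y (h | h)
    · exact hmono le_sup_right x y (hbelow hαγ x y h)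
    · exact hmono le_sup_left x y (hbelow hβδ x y h)

end Relabel

end DecreasingDiagrams

open DecreasingDiagrams in
theorem extended_locally_decreasing_implies_confluent_general {A I : Type*}
    (r : I → A → A → Prop) (gt ge : I → I → Prop)
    (hwf : WellFounded (fun a b => gt b a))
    (hge_refl : Reflexive ge) (hge_trans : Transitive ge)
    (hcompat : ∀ a b c d, ge a b → gt b c → ge c d → gt a d)
    (hLD : ∀ α β s t u, r α s t → r β s u →
      ∃ t₁ t₂ u₁ u₂ v,
        ReflTransGen (below r gt α) t t₁ ∧
        ReflGen (belowEq r gt ge β) t₁ t₂ ∧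
        ReflTransGen (fun a b => below r gt α a b ∨ below r gt β a b) t₂ v ∧
        ReflTransGen (below r gt β) u u₁ ∧
        ReflGen (belowEq r gt ge α) u₁ u₂ ∧
        ReflTransGen (fun a b => below r gt α a b ∨ below r gt β a b) u₂ v) :
    Confluent (unionRel r) := by
  have : IsWellFounded I (fun a b => gt b a) := ⟨hwf⟩
  let rank := IsWellFounded.rank (fun a b => gt b a)
  have hrank : ∀ α β, gt α β → rank β < rank α := fun _ _ h => IsWellFounded.rank_lt_of_rel h
  rw [← unionRel_relabel (f := rank) hge_refl]
  exact confluent_of_locallyDecreasing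
    (locallyDecreasing_relabel hrank hge_refl @hge_trans hcompat hLD)

/-- Every extended locally decreasing ARS is confluent: if `>` (here `gt`) is a
well-founded strict order on `I`, `≥` (here `ge`) is a quasi-order on `I` with
`≥ · > · ≥ ⊆ >`, and every local peak `t ←_α s →_β u` can be completed as
`⇣_α^* · ⇣̂_β^= · ⇣_{αβ}^*` from `t`, meeting `⇣_β^* · ⇣̂_α^= · ⇣_{αβ}^*` from `u`,
then the union of all the relations `→_α` is confluent. -/
theorem extended_locally_decreasing_implies_confluent {A I : Type*}
    (r : I → A → A → Prop) (gt ge : I → I → Prop)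
    (hwf : WellFounded (fun a b => gt b a))
    (htrans : Transitive gt) (hirr : Irreflexive gt)
    (hge_refl : Reflexive ge) (hge_trans : Transitive ge)
    (hcompat : ∀ a b c d, ge a b → gt b c → ge c d → gt a d)
    (hLD : ∀ α β s t u, r α s t → r β s u →
      ∃ t₁ t₂ u₁ u₂ v,
        ReflTransGen (below r gt α) t t₁ ∧
        ReflGen (belowEq r gt ge β) t₁ t₂ ∧
        ReflTransGen (fun a b => below r gt α a b ∨ below r gt β a b) t₂ v ∧
        ReflTransGen (below r gt β) u u₁ ∧
        ReflGen (belowEq r gt ge α) u₁ u₂ ∧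
        ReflTransGen (fun a b => below r gt α a b ∨ below r gt β a b) u₂ v) :
    Confluent (unionRel r) :=
  extended_locally_decreasing_implies_confluent_general r gt ge hwf hge_refl hge_trans hcompat hLD
end

section
/- Reduction of extended local decreasingness to local decreasingness via class labels: let ⟨A, {→_α}_{α∈I}⟩ be an ARS, > a well-founded strict order on I, and ≥ a quasi-order on I with ≥ · > · ≥ ⊆ >, such that LD_{(>,≥)}(α,β) holds for all α, β ∈ I. For a subset C ⊆ I let →_C be the union of →_γ over γ ∈ C, for α ∈ I let C_α = {β ∈ I | α ≥ β and not α > β}, let ≻ be the relation on subsets given by S ≻ T iff ∃ α > β with S = C_α and T = C_β, let ⇣_C denote the union of →_D over all classes D with C ≻ D, and ⇣_{C D} = ⇣_C ∪ ⇣_D. Then for all α, β ∈ I: ←_{C_α} · →_{C_β} ⊆ ⇣_{C_α}^* · →_{C_β}^= · ⇣_{C_α C_β}^* · (⇣_{C_α C_β}^*)^{-1} · (→_{C_α}^=)^{-1} · (⇣_{C_β}^*)^{-1}. -/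
open Relation

/-- The class `C_α = {β | α ≥ β and not α > β}` of a label `α`. -/
def classOf {I : Type*} (gt ge : I → I → Prop) (α : I) : Set I :=
  {β | ge α β ∧ ¬ gt α β}

/-- `→_C`: the union of `→_γ` over all `γ ∈ C`. -/
def relC {A I : Type*} (r : I → A → A → Prop) (C : Set I) : A → A → Prop :=
  fun a b => ∃ γ ∈ C, r γ a b

/-- The lifted order `≻` on subsets of `I`: `S ≻ T` iff there exist `α > β`
with `S = C_α` and `T = C_β`. -/
def succC {I : Type*} (gt ge : I → I → Prop) (S T : Set I) : Prop :=
  ∃ α β, gt α β ∧ S = classOf gt ge α ∧ T = classOf gt ge β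

/-- `⇣_C`: the union of `→_D` over all classes `D` with `C ≻ D`. -/
def belowC {A I : Type*} (r : I → A → A → Prop) (gt ge : I → I → Prop)
    (C : Set I) : A → A → Prop :=
  fun a b => ∃ D, succC gt ge C D ∧ relC r D a b

/-!
A label `α'` in the class `C_α` satisfies `α ≥ α'`, so every `γ < α'` has `γ < α` by
compatibility and `C_α ≻ C_γ`: hence `⇣_{α'} ⊆ ⇣_{C_α}`. A step of `⇣̂_{β'}` with `β' ∈ C_β`
carries a label `γ` with `β ≥ γ` (or `β' > γ`); either `γ` lies in `C_β`, giving a step of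
`→_{C_β}`, or `β > γ`, giving a step of `⇣_{C_β}` that is absorbed into the join part of the
diagram. So the extended locally decreasing diagram of the underlying peak is a locally
decreasing diagram for the class labels.
-/

theorem Relation.ReflGen.exists_reflGen_reflTransGen {α : Type*} {r s t : α → α → Prop}
    (hr : ∀ a b, r a b → s a b ∨ t a b) {a b c : α}
    (hab : ReflGen r a b) (hbc : ReflTransGen t b c) :
    ∃ b', ReflGen s a b' ∧ ReflTransGen t b' c := by
  rcases hab with _ | hab
  · exact ⟨a, .refl, hbc⟩
  · rcases hr _ _ hab with hs | ht
    · exact ⟨b, .single hs, hbc⟩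
    · exact ⟨a, .refl, .head ht hbc⟩

section ClassLabels

variable {A I : Type*} (r : I → A → A → Prop) (gt ge : I → I → Prop)

lemma mem_classOf_self (hge_refl : ∀ a, ge a a) (hirr : ∀ a, ¬ gt a a) (α : I) :
    α ∈ classOf gt ge α :=
  ⟨hge_refl α, hirr α⟩

lemma belowC_of_gt (hge_refl : ∀ a, ge a a) (hirr : ∀ a, ¬ gt a a) {α γ : I}
    (hgt : gt α γ) {a b : A} (h : r γ a b) : belowC r gt ge (classOf gt ge α) a b :=
  ⟨classOf gt ge γ, ⟨α, γ, hgt, rfl, rfl⟩, γ, mem_classOf_self gt ge hge_refl hirr γ, h⟩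

lemma belowC_of_below_of_mem_classOf (hge_refl : ∀ a, ge a a) (hirr : ∀ a, ¬ gt a a)
    (hcompat : ∀ a b c d, ge a b → gt b c → ge c d → gt a d)
    {α α' : I} (hmem : α' ∈ classOf gt ge α) {a b : A} (h : below r gt α' a b) :
    belowC r gt ge (classOf gt ge α) a b := by
  obtain ⟨γ, hgt, hr⟩ := h
  exact belowC_of_gt r gt ge hge_refl hirr (hcompat α α' γ γ hmem.1 hgt (hge_refl γ)) hr

lemma relC_or_belowC_of_belowEq_of_mem_classOf (hge_refl : ∀ a, ge a a)
    (hge_trans : ∀ ⦃a b c⦄, ge a b → ge b c → ge a c) (hirr : ∀ a, ¬ gt a a)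
    (hcompat : ∀ a b c d, ge a b → gt b c → ge c d → gt a d)
    {β β' : I} (hmem : β' ∈ classOf gt ge β) {a b : A} (h : belowEq r gt ge β' a b) :
    relC r (classOf gt ge β) a b ∨ belowC r gt ge (classOf gt ge β) a b := by
  obtain ⟨γ, hge | hgt, hr⟩ := h
  · by_cases hβγ : gt β γ
    · exact .inr (belowC_of_gt r gt ge hge_refl hirr hβγ hr)
    · exact .inl ⟨γ, ⟨hge_trans hmem.1 hge, hβγ⟩, hr⟩
  · exact .inr (belowC_of_below_of_mem_classOf r gt ge hge_refl hirr hcompat hmem ⟨γ, hgt, hr⟩)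

end ClassLabels

theorem extended_ld_to_class_ld_general {A I : Type*}
    (r : I → A → A → Prop) (gt ge : I → I → Prop)
    (hirr : Irreflexive gt)
    (hge_refl : Reflexive ge) (hge_trans : Transitive ge)
    (hcompat : ∀ a b c d, ge a b → gt b c → ge c d → gt a d)
    (hLD : ∀ α β s t u, r α s t → r β s u →
      ∃ t₁ t₂ u₁ u₂ v,
        ReflTransGen (below r gt α) t t₁ ∧
        ReflGen (belowEq r gt ge β) t₁ t₂ ∧
        ReflTransGen (fun a b => below r gt α a b ∨ below r gt β a b) t₂ v ∧
        ReflTransGen (below r gt β) u u₁ ∧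
        ReflGen (belowEq r gt ge α) u₁ u₂ ∧
        ReflTransGen (fun a b => below r gt α a b ∨ below r gt β a b) u₂ v) :
    ∀ α β s t u,
      relC r (classOf gt ge α) s t → relC r (classOf gt ge β) s u →
      ∃ t₁ t₂ u₁ u₂ v,
        ReflTransGen (belowC r gt ge (classOf gt ge α)) t t₁ ∧
        ReflGen (relC r (classOf gt ge β)) t₁ t₂ ∧
        ReflTransGen (fun a b => belowC r gt ge (classOf gt ge α) a b ∨
          belowC r gt ge (classOf gt ge β) a b) t₂ v ∧
        ReflTransGen (belowC r gt ge (classOf gt ge β)) u u₁ ∧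
        ReflGen (relC r (classOf gt ge α)) u₁ u₂ ∧
        ReflTransGen (fun a b => belowC r gt ge (classOf gt ge α) a b ∨
          belowC r gt ge (classOf gt ge β) a b) u₂ v := by
  rintro α β s t u ⟨α', hα, hsα⟩ ⟨β', hβ, hsβ⟩
  obtain ⟨t₁, t₂, u₁, u₂, v, ht₁, ht₂, ht₃, hu₁, hu₂, hu₃⟩ := hLD α' β' s t u hsα hsβ
  have liftα : ∀ a b, below r gt α' a b → belowC r gt ge (classOf gt ge α) a b := fun _ _ =>
    belowC_of_below_of_mem_classOf r gt ge hge_refl hirr hcompat hα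
  have liftβ : ∀ a b, below r gt β' a b → belowC r gt ge (classOf gt ge β) a b := fun _ _ =>
    belowC_of_below_of_mem_classOf r gt ge hge_refl hirr hcompat hβ
  have liftJoin : ∀ a b, below r gt α' a b ∨ below r gt β' a b →
      belowC r gt ge (classOf gt ge α) a b ∨ belowC r gt ge (classOf gt ge β) a b :=
    fun a b => Or.imp (liftα a b) (liftβ a b)
  obtain ⟨t₂', ht₂', ht₃'⟩ := ReflGen.exists_reflGen_reflTransGen
    (fun _ _ h => (relC_or_belowC_of_belowEq_of_mem_classOf r gt ge hge_refl hge_trans hirr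
      hcompat hβ h).imp_right Or.inr) ht₂ (ReflTransGen.mono liftJoin _ _ ht₃)
  obtain ⟨u₂', hu₂', hu₃'⟩ := ReflGen.exists_reflGen_reflTransGen
    (fun _ _ h => (relC_or_belowC_of_belowEq_of_mem_classOf r gt ge hge_refl hge_trans hirr
      hcompat hα h).imp_right Or.inl) hu₂ (ReflTransGen.mono liftJoin _ _ hu₃)
  exact ⟨t₁, t₂', u₁, u₂', v, ReflTransGen.mono liftα _ _ ht₁, ht₂', ht₃',
    ReflTransGen.mono liftβ _ _ hu₁, hu₂', hu₃'⟩

/-- Reduction of extended local decreasingness to local decreasingness via class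
labels: if all peaks `←_α · →_β` are extended locally decreasing with respect to
`(>, ≥)`, then all peaks `←_{C_α} · →_{C_β}` are locally decreasing with respect
to the lifted order `≻` on classes:
`←_{C_α} · →_{C_β} ⊆ ⇣_{C_α}^* · →_{C_β}^= · ⇣_{C_α C_β}^* ·
(⇣_{C_α C_β}^*)⁻¹ · (→_{C_α}^=)⁻¹ · (⇣_{C_β}^*)⁻¹`. -/
theorem extended_ld_to_class_ld {A I : Type*}
    (r : I → A → A → Prop) (gt ge : I → I → Prop)
    (hwf : WellFounded (fun a b => gt b a))
    (htrans : Transitive gt) (hirr : Irreflexive gt)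
    (hge_refl : Reflexive ge) (hge_trans : Transitive ge)
    (hcompat : ∀ a b c d, ge a b → gt b c → ge c d → gt a d)
    (hLD : ∀ α β s t u, r α s t → r β s u →
      ∃ t₁ t₂ u₁ u₂ v,
        ReflTransGen (below r gt α) t t₁ ∧
        ReflGen (belowEq r gt ge β) t₁ t₂ ∧
        ReflTransGen (fun a b => below r gt α a b ∨ below r gt β a b) t₂ v ∧
        ReflTransGen (below r gt β) u u₁ ∧
        ReflGen (belowEq r gt ge α) u₁ u₂ ∧
        ReflTransGen (fun a b => below r gt α a b ∨ below r gt β a b) u₂ v) :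
    ∀ α β s t u,
      relC r (classOf gt ge α) s t → relC r (classOf gt ge β) s u →
      ∃ t₁ t₂ u₁ u₂ v,
        ReflTransGen (belowC r gt ge (classOf gt ge α)) t t₁ ∧
        ReflGen (relC r (classOf gt ge β)) t₁ t₂ ∧
        ReflTransGen (fun a b => belowC r gt ge (classOf gt ge α) a b ∨
          belowC r gt ge (classOf gt ge β) a b) t₂ v ∧
        ReflTransGen (belowC r gt ge (classOf gt ge β)) u u₁ ∧
        ReflGen (relC r (classOf gt ge α)) u₁ u₂ ∧
        ReflTransGen (fun a b => belowC r gt ge (classOf gt ge α) a b ∨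
          belowC r gt ge (classOf gt ge β) a b) u₂ v :=
  extended_ld_to_class_ld_general r gt ge hirr hge_refl hge_trans hcompat hLD
end

section
/- Abstract relative-termination criterion: let R and S be binary relations on a set A, let > be a well-founded strict order and ≥ a quasi-order on A such that ≥ · > · ≥ ⊆ >, R ∪ S ⊆ ≥, and (R \ >) is relatively terminating with respect to (S \ >). Then R is relatively terminating with respect to S. -/
open Relation

/-- A relation is terminating (strongly normalizing) if it admits no infinite
sequence `a₀ → a₁ → a₂ → ⋯`. -/
def Terminating {A : Type*} (r : A → A → Prop) : Prop :=
  ¬ ∃ f : ℕ → A, ∀ n, r (f n) (f (n + 1))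

/-- `R` is relatively terminating with respect to `S` (`R/S` is terminating)
if `→_S^* · →_R · →_S^*` is terminating. -/
def RelTerminating {A : Type*} (R S : A → A → Prop) : Prop :=
  Terminating (Comp (ReflTransGen S) (Comp R (ReflTransGen S)))

/-!
Every `→_S^* · →_R · →_S^*` step is a `≥`-step, so along an infinite chain of such steps only
finitely many can be `>`-steps: infinitely many would give an infinite `>`-descending subsequence.
On the tail where no step is a `>`-step, `≥ · > · ≥ ⊆ >` forbids every inner `R`- and `S`-step
from being a `>`-step, so the tail is an infinite `(R \ >)/(S \ >)`-chain.
-/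

open Filter

section Criterion

variable {A : Type*} {gt ge : A → A → Prop} [Std.Refl ge] [IsTrans A ge]

theorem eventually_not_gt_succ_of_forall_ge_succ (hwf : WellFounded (fun a b => gt b a))
    (hcompat : ∀ a b c, gt a b → ge b c → gt a c) {f : ℕ → A}
    (hf : ∀ n, ge (f n) (f (n + 1))) : ∀ᶠ n in atTop, ¬ gt (f n) (f (n + 1)) := by
  by_contra h
  rw [not_eventually, frequently_atTop'] at h
  simp only [not_not] at h
  obtain ⟨φ, hφ, hgt⟩ := Nat.exists_strictMono_subsequence h
  have : IsWellFounded A (fun a b => gt b a) := ⟨hwf⟩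
  obtain ⟨k, hk⟩ := WellFounded.not_rel_apply_succ (r := fun a b => gt b a) (f ∘ φ)
  exact hk (hcompat _ _ _ (hgt k) (Nat.rel_of_forall_rel_succ_of_le ge hf (hφ k.lt_succ_self)))

variable {R S : A → A → Prop}

theorem Relation.ReflTransGen.and_not_gt_of_not_gt
    (hcompat : ∀ a b c d, ge a b → gt b c → ge c d → gt a d) (hS : S ≤ ge)
    {a a' b b' : A} (ha : ge a' a) (hb : ge b b') (hnot : ¬ gt a' b')
    (h : ReflTransGen S a b) : ReflTransGen (fun u v => S u v ∧ ¬ gt u v) a b := by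
  induction h generalizing b' with
  | refl => exact .refl
  | tail hac hcb ih =>
    refine .tail (ih (_root_.trans (hS _ _ hcb) hb) hnot) ⟨hcb, fun hgt => hnot ?_⟩
    exact hcompat _ _ _ _ (_root_.trans ha (reflTransGen_le_of_le hS _ _ hac)) hgt hb

theorem comp_reflTransGen_le (hR : R ≤ ge) (hS : S ≤ ge) :
    Comp (ReflTransGen S) (Comp R (ReflTransGen S)) ≤ ge := by
  rintro a b ⟨x, hax, y, hxy, hyb⟩
  exact _root_.trans (reflTransGen_le_of_le hS _ _ hax)
    (_root_.trans (hR _ _ hxy) (reflTransGen_le_of_le hS _ _ hyb))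

theorem comp_reflTransGen_and_not_gt_of_not_gt
    (hcompat : ∀ a b c d, ge a b → gt b c → ge c d → gt a d) (hR : R ≤ ge) (hS : S ≤ ge)
    {a b : A} (h : Comp (ReflTransGen S) (Comp R (ReflTransGen S)) a b) (hab : ¬ gt a b) :
    Comp (ReflTransGen fun u v => S u v ∧ ¬ gt u v)
      (Comp (fun u v => R u v ∧ ¬ gt u v) (ReflTransGen fun u v => S u v ∧ ¬ gt u v)) a b := by
  obtain ⟨x, hax, y, hxy, hyb⟩ := h
  have hax' := reflTransGen_le_of_le hS _ _ hax
  have hyb' := reflTransGen_le_of_le hS _ _ hyb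
  refine ⟨x, ?_, y, ⟨hxy, fun hgt => hab (hcompat _ _ _ _ hax' hgt hyb')⟩, ?_⟩
  · exact hax.and_not_gt_of_not_gt hcompat hS (refl a) (_root_.trans (hR _ _ hxy) hyb') hab
  · exact hyb.and_not_gt_of_not_gt hcompat hS (_root_.trans hax' (hR _ _ hxy)) (refl b) hab

end Criterion

theorem relative_termination_criterion_general {A : Type*} (R S gt ge : A → A → Prop)
    (hwf : WellFounded (fun a b => gt b a))
    (hge_refl : Reflexive ge) (hge_trans : Transitive ge)
    (hcompat : ∀ a b c d, ge a b → gt b c → ge c d → gt a d)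
    (hsub : ∀ a b, R a b ∨ S a b → ge a b)
    (hrel : RelTerminating (fun a b => R a b ∧ ¬ gt a b)
                           (fun a b => S a b ∧ ¬ gt a b)) :
    RelTerminating R S := by
  have : Std.Refl ge := ⟨hge_refl⟩
  have : IsTrans A ge := ⟨hge_trans⟩
  have hR : R ≤ ge := fun a b h => hsub a b (.inl h)
  have hS : S ≤ ge := fun a b h => hsub a b (.inr h)
  rintro ⟨f, hf⟩
  obtain ⟨N, hN⟩ := eventually_atTop.1 <|
    eventually_not_gt_succ_of_forall_ge_succ hwf
      (fun a b c => hcompat a a b c (refl a)) fun n => comp_reflTransGen_le hR hS _ _ (hf n)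
  exact hrel ⟨fun n => f (N + n), fun n =>
    comp_reflTransGen_and_not_gt_of_not_gt hcompat hR hS (hf (N + n)) (hN _ (N.le_add_right n))⟩

/-- Abstract relative-termination criterion: if `>` (here `gt`) is a
well-founded strict order and `≥` (here `ge`) a quasi-order on `A` with
`≥ · > · ≥ ⊆ >`, `R ∪ S ⊆ ≥`, and `R \ >` is relatively terminating with
respect to `S \ >`, then `R` is relatively terminating with respect to `S`. -/
theorem relative_termination_criterion {A : Type*} (R S gt ge : A → A → Prop)
    (hwf : WellFounded (fun a b => gt b a))
    (htrans : Transitive gt) (hirr : Irreflexive gt)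
    (hge_refl : Reflexive ge) (hge_trans : Transitive ge)
    (hcompat : ∀ a b c d, ge a b → gt b c → ge c d → gt a d)
    (hsub : ∀ a b, R a b ∨ S a b → ge a b)
    (hrel : RelTerminating (fun a b => R a b ∧ ¬ gt a b)
                           (fun a b => S a b ∧ ¬ gt a b)) :
    RelTerminating R S :=
  relative_termination_criterion_general R S gt ge hwf hge_refl hge_trans hcompat hsub hrel
end

section
/- The linear term rewrite system over the signature {nat, 0 (constants), hd, tl, inc, s (unary), cons (binary)} with rules nat → cons(0, inc(nat)), hd(cons(x,y)) → x, tl(cons(x,y)) → y, inc(cons(x,y)) → cons(s(x), inc(y)), and inc(tl(nat)) → tl(inc(nat)) is confluent. -/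
open Relation

/-- Ground terms over the signature
{nat, 0 (constants), hd, tl, inc, s (unary), cons (binary)}. -/
inductive Tm : Type where
  | nat : Tm
  | zero : Tm
  | hd : Tm → Tm
  | tl : Tm → Tm
  | inc : Tm → Tm
  | s : Tm → Tm
  | cons : Tm → Tm → Tm

/-- The one-step rewrite relation generated by the rules
`nat → cons(0, inc(nat))`, `hd(cons(x,y)) → x`, `tl(cons(x,y)) → y`,
`inc(cons(x,y)) → cons(s(x), inc(y))`, `inc(tl(nat)) → tl(inc(nat))`,
closed under contexts. -/
inductive Step : Tm → Tm → Prop where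
  | nat_rule : Step .nat (.cons .zero (.inc .nat))
  | hd_rule (t u : Tm) : Step (.hd (.cons t u)) t
  | tl_rule (t u : Tm) : Step (.tl (.cons t u)) u
  | inc_rule (t u : Tm) : Step (.inc (.cons t u)) (.cons (.s t) (.inc u))
  | inc_tl_rule : Step (.inc (.tl .nat)) (.tl (.inc .nat))
  | hd_cong {t u : Tm} : Step t u → Step (.hd t) (.hd u)
  | tl_cong {t u : Tm} : Step t u → Step (.tl t) (.tl u)
  | inc_cong {t u : Tm} : Step t u → Step (.inc t) (.inc u)
  | s_cong {t u : Tm} : Step t u → Step (.s t) (.s u)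
  | cons_congl {t u : Tm} (v : Tm) : Step t u → Step (.cons t v) (.cons u v)
  | cons_congr {t u : Tm} (v : Tm) : Step t u → Step (.cons v t) (.cons v u)

/-!
The proof uses the Z-property of Dehornoy and van Oostrom: a relation `→` is confluent as
soon as some map `•` satisfies `b ↠ a• ↠ b•` whenever `a → b`. For this system the map
`•` rewrites bottom-up, replacing `nat` by `cons(0, inc(nat))` and contracting at every
`hd`, `tl` or `inc` node the redex that the already processed argument exposes.
-/

open Relation

namespace Relation

variable {α : Type*} {r : α → α → Prop}

theorem confluent_of_semiconfluent
    (h : ∀ a b c, r a b → ReflTransGen r a c → Relation.Join (ReflTransGen r) b c) :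
    Confluent r := by
  intro a b c hab hac
  induction hab using ReflTransGen.head_induction_on generalizing c with
  | refl => exact ⟨c, hac, .refl⟩
  | head hstep _ ih =>
    obtain ⟨d, hbd, hcd⟩ := h _ _ _ hstep hac
    obtain ⟨e, hbe, hde⟩ := ih d hbd
    exact ⟨e, hbe, hcd.trans hde⟩

theorem confluent_of_zProperty (f : α → α)
    (hz : ∀ a b, r a b → ReflTransGen r b (f a) ∧ ReflTransGen r (f a) (f b)) :
    Confluent r := by
  have mono : ∀ {a b}, ReflTransGen r a b → ReflTransGen r (f a) (f b) :=
    fun hab => ReflTransGen.lift' f (fun a b h => (hz a b h).2) _ _ hab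
  refine confluent_of_semiconfluent fun a b c hab hac => ?_
  rcases hac.cases_tail with rfl | ⟨c', hac', hc'c⟩
  · exact ⟨b, .refl, .single hab⟩
  · obtain ⟨hc_fc', hfc'_fc⟩ := hz c' c hc'c
    exact ⟨f c, (hz a b hab).1.trans ((mono hac').trans hfc'_fc), hc_fc'.trans hfc'_fc⟩

end Relation

local notation:50 t " ↠ " u => ReflTransGen Step t u

namespace Tm

def mkHd : Tm → Tm
  | cons a _ => a
  | t => hd t

def mkTl : Tm → Tm
  | cons _ b => b
  | t => tl t

def mkInc : Tm → Tm
  | cons a b => cons (s a) (inc b)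
  | t => inc t

def bullet : Tm → Tm
  | nat => cons zero (inc nat)
  | zero => zero
  | s t => s (bullet t)
  | cons t u => cons (bullet t) (bullet u)
  | hd t => mkHd (bullet t)
  | tl t => mkTl (bullet t)
  | inc t => mkInc (bullet t)

theorem hd_reduces {t u : Tm} (h : t ↠ u) : hd t ↠ hd u :=
  ReflTransGen.lift hd (fun _ _ => Step.hd_cong) _ _ h

theorem tl_reduces {t u : Tm} (h : t ↠ u) : tl t ↠ tl u :=
  ReflTransGen.lift tl (fun _ _ => Step.tl_cong) _ _ h

theorem inc_reduces {t u : Tm} (h : t ↠ u) : inc t ↠ inc u :=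
  ReflTransGen.lift inc (fun _ _ => Step.inc_cong) _ _ h

theorem s_reduces {t u : Tm} (h : t ↠ u) : s t ↠ s u :=
  ReflTransGen.lift s (fun _ _ => Step.s_cong) _ _ h

theorem cons_reduces {t t' u u' : Tm} (ht : t ↠ t') (hu : u ↠ u') : cons t u ↠ cons t' u' :=
  (ReflTransGen.lift (cons · u) (fun _ _ => Step.cons_congl u) _ _ ht).trans
    (ReflTransGen.lift (cons t') (fun _ _ => Step.cons_congr t') _ _ hu)

theorem hd_reduces_mkHd (t : Tm) : hd t ↠ mkHd t := by
  cases t with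
  | cons a b => exact .single (.hd_rule a b)
  | _ => exact .refl

theorem tl_reduces_mkTl (t : Tm) : tl t ↠ mkTl t := by
  cases t with
  | cons a b => exact .single (.tl_rule a b)
  | _ => exact .refl

theorem inc_reduces_mkInc (t : Tm) : inc t ↠ mkInc t := by
  cases t with
  | cons a b => exact .single (.inc_rule a b)
  | _ => exact .refl

theorem reduces_bullet : ∀ t : Tm, t ↠ bullet t
  | nat => .single .nat_rule
  | zero => .refl
  | s t => s_reduces (reduces_bullet t)
  | cons t u => cons_reduces (reduces_bullet t) (reduces_bullet u)
  | hd t => (hd_reduces (reduces_bullet t)).trans (hd_reduces_mkHd _)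
  | tl t => (tl_reduces (reduces_bullet t)).trans (tl_reduces_mkTl _)
  | inc t => (inc_reduces (reduces_bullet t)).trans (inc_reduces_mkInc _)

end Tm

namespace Step

open Tm

theorem mkHd_reduces {t u : Tm} (h : Step t u) : mkHd t ↠ mkHd u := by
  cases t with
  | cons a b =>
    cases h with
    | cons_congl _ h => exact .single h
    | cons_congr _ _ => exact .refl
  | _ => exact .head (.hd_cong h) (hd_reduces_mkHd u)

theorem mkTl_reduces {t u : Tm} (h : Step t u) : mkTl t ↠ mkTl u := by
  cases t with
  | cons a b =>
    cases h with
    | cons_congl _ _ => exact .refl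
    | cons_congr _ h => exact .single h
  | _ => exact .head (.tl_cong h) (tl_reduces_mkTl u)

theorem mkInc_reduces {t u : Tm} (h : Step t u) : mkInc t ↠ mkInc u := by
  cases t with
  | cons a b =>
    cases h with
    | cons_congl _ h => exact .single (.cons_congl _ (.s_cong h))
    | cons_congr _ h => exact .single (.cons_congr _ (.inc_cong h))
  | _ => exact .head (.inc_cong h) (inc_reduces_mkInc u)

theorem inc_nat_reduces : inc nat ↠ cons (s zero) (inc (inc nat)) :=
  .head (.inc_cong .nat_rule) (.single (.inc_rule _ _))

theorem reduces_bullet : ∀ {t u : Tm}, Step t u → u ↠ bullet t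
  | _, _, nat_rule => .refl
  | _, _, hd_rule t _ => Tm.reduces_bullet t
  | _, _, tl_rule _ u => Tm.reduces_bullet u
  | _, _, inc_rule t u => cons_reduces (s_reduces t.reduces_bullet) (inc_reduces u.reduces_bullet)
  | _, _, inc_tl_rule => (tl_reduces inc_nat_reduces).trans (.single (.tl_rule _ _))
  | _, _, hd_cong h => (hd_reduces h.reduces_bullet).trans (hd_reduces_mkHd _)
  | _, _, tl_cong h => (tl_reduces h.reduces_bullet).trans (tl_reduces_mkTl _)
  | _, _, inc_cong h => (inc_reduces h.reduces_bullet).trans (inc_reduces_mkInc _)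
  | _, _, s_cong h => s_reduces h.reduces_bullet
  | _, _, cons_congl v h => cons_reduces h.reduces_bullet v.reduces_bullet
  | _, _, cons_congr v h => cons_reduces v.reduces_bullet h.reduces_bullet

theorem bullet_reduces : ∀ {t u : Tm}, Step t u → bullet t ↠ bullet u
  | _, _, nat_rule => cons_reduces .refl inc_nat_reduces
  | _, _, hd_rule _ _ => .refl
  | _, _, tl_rule _ _ => .refl
  | _, _, inc_rule _ u => cons_reduces .refl (inc_reduces_mkInc (bullet u))
  | _, _, inc_tl_rule => .refl
  | _, _, hd_cong h => ReflTransGen.lift' mkHd (fun _ _ => mkHd_reduces) _ _ h.bullet_reduces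
  | _, _, tl_cong h => ReflTransGen.lift' mkTl (fun _ _ => mkTl_reduces) _ _ h.bullet_reduces
  | _, _, inc_cong h => ReflTransGen.lift' mkInc (fun _ _ => mkInc_reduces) _ _ h.bullet_reduces
  | _, _, s_cong h => s_reduces h.bullet_reduces
  | _, _, cons_congl _ h => cons_reduces h.bullet_reduces .refl
  | _, _, cons_congr _ h => cons_reduces .refl h.bullet_reduces

end Step

/-- The linear TRS `{nat → cons(0, inc(nat)), hd(cons(x,y)) → x,
tl(cons(x,y)) → y, inc(cons(x,y)) → cons(s(x), inc(y)),
inc(tl(nat)) → tl(inc(nat))}` is confluent. -/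
theorem example_confluent : Confluent Step :=
  confluent_of_zProperty Tm.bullet fun _ _ h => ⟨h.reduces_bullet, h.bullet_reduces⟩
end
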